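/- arXiv:2306.12415 — 4 statements merged into one kernel-verified Lean document; each statement's English description precedes it below -/
import Mathlib

section
/- Let G and H be finite groups whose orders have the same prime factors, and let α : G →* MulAut H be an action by automorphisms. Let L₁ = O(a) and L₂ = O(b) be non-trivial orbits with |L₂| > |L₁|, such that gcd(|L₁|,|L₂|) = 1 and no non-trivial orbit L₃ satisfies both gcd(|L₃|,|L₁|) > 1 and gcd(|L₃|,|L₂|) > 1 (i.e. L₁ and L₂ are at distance at least 3 in the common divisor graph). Then L₂·L₁⁻¹ is an orbit, namely L₂·L₁⁻¹ = O(b a⁻¹), and |L₂·L₁⁻¹| = |L₂|. -/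
/-!
Coprime orbit sizes force the stabilizer of the pair `(b, a)` to have index `|L₂| |L₁|`, so `G`
acts transitively on `L₂ × L₁` and `L₂ L₁⁻¹`, the image of that product under `(u, v) ↦ u v⁻¹`,
is the single orbit `O(b a⁻¹)`. Its size `m` satisfies `|L₂| ≤ m ∣ |L₁| |L₂|`. Since `m > |L₁|`,
`m` cannot divide `|L₁|`, so it shares a factor with `|L₂|`; the distance condition then makes it
coprime to `|L₁|`, whence `m ∣ |L₂|` and `m = |L₂|`.
-/

open Pointwise

/-- The orbit of `a : H` under the action of `G` on `H` via `α`. -/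
def orbitOf {G H : Type*} [Group G] [Group H] (α : G →* MulAut H) (a : H) : Set H :=
  Set.range fun g : G => α g a

theorem Subgroup.index_inf_of_coprime {G : Type*} [Group G] {S T : Subgroup G}
    [S.FiniteIndex] [T.FiniteIndex] (h : S.index.Coprime T.index) :
    (S ⊓ T).index = S.index * T.index :=
  le_antisymm Subgroup.index_inf_le <|
    Nat.le_of_dvd (Nat.pos_of_ne_zero Subgroup.FiniteIndex.index_ne_zero) <|
    h.mul_dvd_of_dvd_of_dvd (Subgroup.index_dvd_of_le inf_le_left)
      (Subgroup.index_dvd_of_le inf_le_right)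

theorem Nat.eq_of_dvd_mul_of_lt_of_le {m n₁ n₂ : ℕ} (hn₁ : 0 < n₁) (hlt : n₁ < n₂) (hle : n₂ ≤ m)
    (hdvd : m ∣ n₁ * n₂) (hgcd : ¬(1 < m.gcd n₁ ∧ 1 < m.gcd n₂)) : m = n₂ := by
  have hm : 0 < m := by omega
  have h₂ : 1 < m.gcd n₂ := by
    by_contra h
    have hcop : m.Coprime n₂ := by have := Nat.gcd_pos_of_pos_left n₂ hm; unfold Nat.Coprime; omega
    have := Nat.le_of_dvd hn₁ (hcop.dvd_of_dvd_mul_right hdvd)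
    omega
  have hcop : m.Coprime n₁ := by
    have := Nat.gcd_pos_of_pos_left n₁ hm; unfold Nat.Coprime; omega
  exact le_antisymm (Nat.le_of_dvd (by omega) (hcop.dvd_of_dvd_mul_left hdvd)) hle

theorem Set.ncard_le_ncard_mul_right {α : Type*} [Group α] {s t : Set α} (ht : t.Nonempty)
    (hfin : (s * t).Finite) : s.ncard ≤ (s * t).ncard := by
  obtain ⟨c, hc⟩ := ht
  calc s.ncard = ((· * c) '' s).ncard :=
        (Set.ncard_image_of_injective _ (mul_left_injective c)).symm
    _ ≤ (s * t).ncard :=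
      Set.ncard_le_ncard (Set.image_subset_iff.mpr fun _ hx => Set.mul_mem_mul hx hc) hfin

namespace MulAction

section Prod

variable {G X Y : Type*} [Group G] [MulAction G X] [MulAction G Y]

theorem stabilizer_prod (x : X) (y : Y) :
    stabilizer G (x, y) = stabilizer G x ⊓ stabilizer G y := by
  ext g
  simp [Prod.ext_iff]

theorem orbit_prod_subset (x : X) (y : Y) : orbit G (x, y) ⊆ orbit G x ×ˢ orbit G y := by
  rintro _ ⟨g, rfl⟩
  exact ⟨⟨g, rfl⟩, ⟨g, rfl⟩⟩

theorem ncard_orbit_dvd_of_stabilizer_le [Finite G] {x : X} {y : Y}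
    (h : stabilizer G x ≤ stabilizer G y) : (orbit G y).ncard ∣ (orbit G x).ncard := by
  rw [← index_stabilizer, ← index_stabilizer]
  exact Subgroup.index_dvd_of_le h

theorem orbit_prod_eq_of_coprime [Finite G] {x : X} {y : Y}
    (h : (orbit G x).ncard.Coprime (orbit G y).ncard) :
    orbit G (x, y) = orbit G x ×ˢ orbit G y := by
  refine Set.eq_of_subset_of_ncard_le (orbit_prod_subset x y) ?_
    ((Finite.finite_mulAction_orbit _).prod (Finite.finite_mulAction_orbit _))
  rw [← index_stabilizer G x, ← index_stabilizer G y] at h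
  rw [Set.ncard_prod, ← index_stabilizer G x, ← index_stabilizer G y, ← index_stabilizer,
    stabilizer_prod, Subgroup.index_inf_of_coprime h]

end Prod

section MulDistrib

variable {G H : Type*} [Group G] [Group H] [MulDistribMulAction G H]

theorem orbit_mul_inv_eq_image (a b : H) :
    orbit G (b * a⁻¹) = (fun p : H × H => p.1 * p.2⁻¹) '' orbit G (b, a) := by
  rw [orbit, orbit, ← Set.range_comp]
  congr 1
  ext g
  simp [smul_mul', smul_inv']

theorem stabilizer_prod_le_stabilizer_mul_inv (a b : H) :
    stabilizer G (b, a) ≤ stabilizer G (b * a⁻¹) := by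
  intro g hg
  obtain ⟨hb, ha⟩ := Subgroup.mem_inf.mp ((stabilizer_prod b a).le hg)
  rw [mem_stabilizer_iff] at hb ha ⊢
  rw [smul_mul', smul_inv', hb, ha]

theorem orbit_mul_inv_orbit_eq_of_coprime [Finite G] {a b : H}
    (h : (orbit G b).ncard.Coprime (orbit G a).ncard) :
    orbit G b * (orbit G a)⁻¹ = orbit G (b * a⁻¹) := by
  rw [orbit_mul_inv_eq_image, orbit_prod_eq_of_coprime h]
  simp only [Set.image_prod, ← div_eq_mul_inv, Set.image2_div]

theorem ncard_orbit_mul_inv_dvd_of_coprime [Finite G] {a b : H}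
    (h : (orbit G b).ncard.Coprime (orbit G a).ncard) :
    (orbit G (b * a⁻¹)).ncard ∣ (orbit G a).ncard * (orbit G b).ncard := by
  rw [mul_comm, ← Set.ncard_prod, ← orbit_prod_eq_of_coprime h]
  exact ncard_orbit_dvd_of_stabilizer_le (stabilizer_prod_le_stabilizer_mul_inv a b)

end MulDistrib

end MulAction

open MulAction

theorem stmt_1_general {G H : Type*} [Group G] [Group H] [Finite G] [Finite H]
    (α : G →* MulAut H)
    (a b : H)
    (hlt : (orbitOf α a).ncard < (orbitOf α b).ncard)
    (hco : Nat.gcd (orbitOf α a).ncard (orbitOf α b).ncard = 1)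
    (hdist : ∀ c : H, 1 < (orbitOf α c).ncard →
      ¬(1 < Nat.gcd (orbitOf α c).ncard (orbitOf α a).ncard ∧
        1 < Nat.gcd (orbitOf α c).ncard (orbitOf α b).ncard)) :
    orbitOf α b * (orbitOf α a)⁻¹ = orbitOf α (b * a⁻¹) ∧
    (orbitOf α b * (orbitOf α a)⁻¹).ncard = (orbitOf α b).ncard := by
  let _ : MulDistribMulAction G H := .compHom H α
  have horbit (c : H) : orbitOf α c = orbit G c := rfl
  simp only [horbit] at hlt hco hdist ⊢
  have hcop : (orbit G b).ncard.Coprime (orbit G a).ncard := Nat.Coprime.symm hco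
  have heq := orbit_mul_inv_orbit_eq_of_coprime hcop
  refine ⟨heq, ?_⟩
  have hpos : 0 < (orbit G a).ncard := (Set.ncard_pos (Set.toFinite _)).mpr ⟨a, mem_orbit_self a⟩
  have hle : (orbit G b).ncard ≤ (orbit G (b * a⁻¹)).ncard := heq ▸
    Set.ncard_le_ncard_mul_right ⟨a⁻¹, Set.inv_mem_inv.mpr (mem_orbit_self a)⟩ (Set.toFinite _)
  rw [heq]
  exact Nat.eq_of_dvd_mul_of_lt_of_le hpos hlt hle (ncard_orbit_mul_inv_dvd_of_coprime hcop)
    (hdist _ (by omega))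

theorem stmt_1 {G H : Type*} [Group G] [Group H] [Finite G] [Finite H]
    (α : G →* MulAut H)
    (hpf : ∀ p : ℕ, p.Prime → (p ∣ Nat.card G ↔ p ∣ Nat.card H))
    (a b : H)
    (ha : 1 < (orbitOf α a).ncard) (hb : 1 < (orbitOf α b).ncard)
    (hlt : (orbitOf α a).ncard < (orbitOf α b).ncard)
    (hco : Nat.gcd (orbitOf α a).ncard (orbitOf α b).ncard = 1)
    (hdist : ∀ c : H, 1 < (orbitOf α c).ncard →
      ¬(1 < Nat.gcd (orbitOf α c).ncard (orbitOf α a).ncard ∧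
        1 < Nat.gcd (orbitOf α c).ncard (orbitOf α b).ncard)) :
    orbitOf α b * (orbitOf α a)⁻¹ = orbitOf α (b * a⁻¹) ∧
    (orbitOf α b * (orbitOf α a)⁻¹).ncard = (orbitOf α b).ncard :=
  stmt_1_general α a b hlt hco hdist
end

section
/- Let G and H be finite groups whose orders have the same prime factors, and let α : G →* MulAut H be an action by automorphisms. Then there do not exist three non-trivial orbits L₁, L₂, L₃ with |L₃| > |L₂| > |L₁| such that: gcd(|L₁|,|L₂|) = 1 and no non-trivial orbit is adjacent in the common divisor graph to both L₁ and L₂ (i.e. d(L₁,L₂) ≥ 3), and gcd(|L₂|,|L₃|) = 1 and no non-trivial orbit is adjacent to both L₂ and L₃ (i.e. d(L₂,L₃) ≥ 3). -/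
/-!
Let `a ∈ L₁`, `b ∈ L₂`, `c ∈ L₃`. Since `|L₁|` and `|L₂|` are coprime,
the stabilizer of `a` is transitive on `L₂`, so `a • L₂ ⊆ O(ab)`; the orbit of `ab` has size
dividing `|L₁| |L₂|` and at least `|L₂|`, and as it cannot share a prime with both `|L₁|` and
`|L₂|` it is exactly `a • L₂`. Hence `L₁ L₂ = a L₂`, so the non-trivial element `t = a⁻¹x`
(`x ∈ L₁`, `x ≠ a`) satisfies `t L₂ ⊆ L₂`. The same argument for `(L₂, L₃)` shows that the
conjugate `b⁻¹ t b ∈ b⁻¹ L₂` satisfies `b⁻¹ t b L₃ ⊆ L₃`. A set stable under left multiplication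
by `t` is a union of right cosets of `⟨t⟩`, so the order of `t` divides both `|L₂|` and `|L₃|`,
which are coprime: `t = 1`, a contradiction.
-/

open Pointwise

open MulAction

theorem Subgroup.index_inf_of_coprime_s4 {G : Type*} [Group G] {H K : Subgroup G}
    (h : H.index.Coprime K.index) : (H ⊓ K).index = H.index * K.index := by
  have hdvd : H.index * K.index ∣ (H ⊓ K).index :=
    h.mul_dvd_of_dvd_of_dvd (index_dvd_of_le inf_le_left) (index_dvd_of_le inf_le_right)
  rcases eq_or_ne (H.index * K.index) 0 with h0 | h0
  · rw [h0]
    exact Nat.eq_zero_of_zero_dvd (h0 ▸ hdvd)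
  · obtain ⟨hH, hK⟩ := mul_ne_zero_iff.mp h0
    exact le_antisymm index_inf_le
      (Nat.le_of_dvd (Nat.pos_of_ne_zero (index_inf_ne_zero hH hK)) hdvd)

theorem orderOf_dvd_ncard_of_mapsTo_mul_left {H : Type*} [Group H] [Finite H] {t : H}
    {B : Set H} (h : Set.MapsTo (t * ·) B B) : orderOf t ∣ B.ncard := by
  have hpow : ∀ n : ℕ, Set.MapsTo (t ^ n * ·) B B := by
    intro n
    induction n with
    | zero => intro x hx; simpa using hx
    | succ n ih => simpa [pow_succ', mul_assoc, Function.comp_def] using h.comp ih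
  have hstable : B⁻¹ * (Subgroup.zpowers t : Set H) = B⁻¹ := by
    refine (Set.Subset.antisymm ?_ fun x hx => ⟨x, hx, 1, one_mem _, mul_one x⟩)
    rintro _ ⟨x, hx, z, hz, rfl⟩
    obtain ⟨n, hn : t ^ n = z⁻¹⟩ := mem_powers_iff_mem_zpowers.mpr (inv_mem hz)
    have : (x * z)⁻¹ = t ^ n * x⁻¹ := by rw [hn, mul_inv_rev]
    simpa [Set.mem_inv, this] using hpow n hx
  have := Subgroup.card_mul_eq_card_subgroup_mul_card_quotient (Subgroup.zpowers t) B⁻¹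
  rw [hstable, Nat.card_zpowers, Nat.card_coe_set_eq, Set.ncard_inv] at this
  exact Dvd.intro _ this.symm

section OrbitStabilizer

variable {G X : Type*} [Group G] [MulAction G X] [Finite X]

theorem MulAction.orbit_stabilizer_eq_orbit_of_coprime {a b : X}
    (hcop : (orbit G a).ncard.Coprime (orbit G b).ncard) :
    orbit (stabilizer G a) b = orbit G b := by
  set Sa := stabilizer G a
  set Sb := stabilizer G b
  have hsub : orbit Sa b ⊆ orbit G b := by
    rintro _ ⟨g, rfl⟩
    exact ⟨g, rfl⟩
  have hcard : (orbit Sa b).ncard = Sb.relIndex Sa := by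
    rw [← index_stabilizer, Subgroup.relIndex]
    rfl
  have hSa : 0 < Sa.index := by
    rw [index_stabilizer]
    exact (Set.ncard_pos (Set.toFinite _)).mpr ⟨a, mem_orbit_self a⟩
  have hrel : Sb.relIndex Sa * Sa.index = Sb.index * Sa.index := by
    rw [← Subgroup.inf_relIndex_right, Subgroup.relIndex_mul_index inf_le_right,
      Subgroup.index_inf_of_coprime_s4 (by rwa [index_stabilizer, index_stabilizer, Nat.coprime_comm])]
  refine Set.eq_of_subset_of_ncard_le hsub ?_ (Set.toFinite _)
  rw [hcard, Nat.eq_of_mul_eq_mul_right hSa hrel, index_stabilizer]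

end OrbitStabilizer

theorem Nat.eq_of_dvd_mul_of_not_one_lt_gcd {m n₁ n₂ : ℕ} (hdvd : m ∣ n₁ * n₂) (hn₁ : 0 < n₁)
    (hlt : n₁ < n₂) (hle : n₂ ≤ m) (hgcd : ¬(1 < m.gcd n₁ ∧ 1 < m.gcd n₂)) : m = n₂ := by
  have hm : 0 < m := by omega
  have h₁ := Nat.gcd_pos_of_pos_left n₁ hm
  have h₂ := Nat.gcd_pos_of_pos_left n₂ hm
  by_cases hcop : m.Coprime n₁
  · exact le_antisymm (Nat.le_of_dvd (by omega) (hcop.dvd_of_dvd_mul_left hdvd)) hle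
  · have hcop₂ : m.Coprime n₂ := by unfold Nat.Coprime at hcop ⊢; omega
    have := Nat.le_of_dvd hn₁ (hcop₂.dvd_of_dvd_mul_right hdvd)
    omega

section MulDistribMulAction

variable {G H : Type*} [Group G] [Group H] [MulDistribMulAction G H]

theorem MulAction.mul_mem_orbit_mul {a b x y : H}
    (htrans : orbit (stabilizer G a) b = orbit G b) (hx : x ∈ orbit G a) (hy : y ∈ orbit G b) :
    x * y ∈ orbit G (a * b) := by
  obtain ⟨g, rfl⟩ := hx
  have : g⁻¹ • y ∈ orbit (stabilizer G a) b := by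
    rw [htrans]
    exact mem_orbit_of_mem_orbit g⁻¹ hy
  obtain ⟨⟨s, hs : s • a = a⟩, hsy : s • b = g⁻¹ • y⟩ := this
  refine ⟨g * s, ?_⟩
  change (g * s) • (a * b) = g • a * y
  rw [mul_smul, smul_mul', hs, hsy, smul_mul', smul_inv_smul]

theorem MulAction.ncard_orbit_mul_dvd {a b : H}
    (hcop : (orbit G a).ncard.Coprime (orbit G b).ncard) :
    (orbit G (a * b)).ncard ∣ (orbit G a).ncard * (orbit G b).ncard := by
  rw [← index_stabilizer, ← index_stabilizer, ← index_stabilizer,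
    ← Subgroup.index_inf_of_coprime_s4 (by rwa [index_stabilizer, index_stabilizer])]
  exact Subgroup.index_dvd_of_le fun g ⟨(hga : g • a = a), (hgb : g • b = b)⟩ => by
    rw [mem_stabilizer_iff, smul_mul', hga, hgb]

variable [Finite H]

theorem MulAction.orbit_mul_eq_smul_orbit {a b : H}
    (hlt : (orbit G a).ncard < (orbit G b).ncard)
    (hcop : (orbit G a).ncard.Coprime (orbit G b).ncard)
    (hd : ∀ d : H, 1 < (orbit G d).ncard →
      ¬(1 < Nat.gcd (orbit G d).ncard (orbit G a).ncard ∧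
        1 < Nat.gcd (orbit G d).ncard (orbit G b).ncard)) :
    orbit G (a * b) = a • orbit G b := by
  have hsub : a • orbit G b ⊆ orbit G (a * b) := by
    rintro _ ⟨y, hy, rfl⟩
    exact mul_mem_orbit_mul (orbit_stabilizer_eq_orbit_of_coprime hcop) (mem_orbit_self a) hy
  have hcard : (a • orbit G b).ncard = (orbit G b).ncard := Set.ncard_smul_set a _
  have hle := hcard ▸ Set.ncard_le_ncard hsub (Set.toFinite _)
  have hpos : 0 < (orbit G a).ncard := (Set.ncard_pos (Set.toFinite _)).mpr ⟨a, mem_orbit_self a⟩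
  refine (Set.eq_of_subset_of_ncard_le hsub ?_ (Set.toFinite _)).symm
  rw [hcard, Nat.eq_of_dvd_mul_of_not_one_lt_gcd (ncard_orbit_mul_dvd hcop) hpos hlt hle
    (hd _ (by omega))]

theorem MulAction.inv_mul_mul_mem_orbit {a b x y : H}
    (hlt : (orbit G a).ncard < (orbit G b).ncard)
    (hcop : (orbit G a).ncard.Coprime (orbit G b).ncard)
    (hd : ∀ d : H, 1 < (orbit G d).ncard →
      ¬(1 < Nat.gcd (orbit G d).ncard (orbit G a).ncard ∧
        1 < Nat.gcd (orbit G d).ncard (orbit G b).ncard))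
    (hx : x ∈ orbit G a) (hy : y ∈ orbit G b) : a⁻¹ * (x * y) ∈ orbit G b := by
  have hxy := mul_mem_orbit_mul (orbit_stabilizer_eq_orbit_of_coprime hcop) hx hy
  rw [orbit_mul_eq_smul_orbit hlt hcop hd] at hxy
  obtain ⟨z, hz, hzxy : a * z = x * y⟩ := hxy
  rwa [← hzxy, inv_mul_cancel_left]

end MulDistribMulAction

theorem stmt_4_general {G H : Type*} [Group G] [Group H] [Finite H]
    (α : G →* MulAut H) :
    ¬ ∃ a b c : H,
      1 < (orbitOf α a).ncard ∧ 1 < (orbitOf α b).ncard ∧ 1 < (orbitOf α c).ncard ∧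
      (orbitOf α a).ncard < (orbitOf α b).ncard ∧
      (orbitOf α b).ncard < (orbitOf α c).ncard ∧
      Nat.gcd (orbitOf α a).ncard (orbitOf α b).ncard = 1 ∧
      (∀ d : H, 1 < (orbitOf α d).ncard →
        ¬(1 < Nat.gcd (orbitOf α d).ncard (orbitOf α a).ncard ∧
          1 < Nat.gcd (orbitOf α d).ncard (orbitOf α b).ncard)) ∧
      Nat.gcd (orbitOf α b).ncard (orbitOf α c).ncard = 1 ∧
      (∀ d : H, 1 < (orbitOf α d).ncard →
        ¬(1 < Nat.gcd (orbitOf α d).ncard (orbitOf α b).ncard ∧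
          1 < Nat.gcd (orbitOf α d).ncard (orbitOf α c).ncard)) := by
  -- `orbitOf α` is, by definition, `orbit G` for this action
  let := MulDistribMulAction.compHom H α
  rintro ⟨a, b, c, ha, -, -, hab, hbc, hcop_ab, hd_ab, hcop_bc, hd_bc⟩
  obtain ⟨x, hx, hxa⟩ := (orbit G a).exists_ne_of_one_lt_ncard ha a
  set t := a⁻¹ * x
  have ht : Set.MapsTo (t * ·) (orbit G b) (orbit G b) := fun y hy => by
    simpa only [t, mul_assoc] using inv_mul_mul_mem_orbit hab hcop_ab hd_ab hx hy
  set s := b⁻¹ * (t * b)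
  have hs : Set.MapsTo (s * ·) (orbit G c) (orbit G c) := fun z hz => by
    simpa only [s, mul_assoc] using
      inv_mul_mul_mem_orbit hbc hcop_bc hd_bc (ht (mem_orbit_self b)) hz
  have hst : orderOf s = orderOf t := SemiconjBy.orderOf_eq b (mul_inv_cancel_left b (t * b))
  have ht1 : orderOf t = 1 := Nat.eq_one_of_dvd_coprimes hcop_bc
    (orderOf_dvd_ncard_of_mapsTo_mul_left ht) (hst ▸ orderOf_dvd_ncard_of_mapsTo_mul_left hs)
  exact hxa (inv_mul_eq_one.mp (orderOf_eq_one_iff.mp ht1)).symm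

theorem stmt_4 {G H : Type*} [Group G] [Group H] [Finite G] [Finite H]
    (α : G →* MulAut H)
    (hpf : ∀ p : ℕ, p.Prime → (p ∣ Nat.card G ↔ p ∣ Nat.card H)) :
    ¬ ∃ a b c : H,
      1 < (orbitOf α a).ncard ∧ 1 < (orbitOf α b).ncard ∧ 1 < (orbitOf α c).ncard ∧
      (orbitOf α a).ncard < (orbitOf α b).ncard ∧
      (orbitOf α b).ncard < (orbitOf α c).ncard ∧
      Nat.gcd (orbitOf α a).ncard (orbitOf α b).ncard = 1 ∧
      (∀ d : H, 1 < (orbitOf α d).ncard →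
        ¬(1 < Nat.gcd (orbitOf α d).ncard (orbitOf α a).ncard ∧
          1 < Nat.gcd (orbitOf α d).ncard (orbitOf α b).ncard)) ∧
      Nat.gcd (orbitOf α b).ncard (orbitOf α c).ncard = 1 ∧
      (∀ d : H, 1 < (orbitOf α d).ncard →
        ¬(1 < Nat.gcd (orbitOf α d).ncard (orbitOf α b).ncard ∧
          1 < Nat.gcd (orbitOf α d).ncard (orbitOf α c).ncard)) :=
  stmt_4_general α
end

section
/- Let G and H be finite groups whose orders have the same prime factors, and let α : G →* MulAut H be an action by automorphisms. Then the common divisor graph C(α) has at most two connected components, i.e. the number of connected components of the simple graph whose vertices are the non-trivial orbits (with distinct orbits adjacent iff their cardinalities are not coprime) is at most 2. -/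
/-- The common divisor graph of the action `α`: vertices are the non-trivial orbits,
two distinct vertices are adjacent iff their cardinalities have a common divisor `> 1`. -/
def commonDivisorGraph {G H : Type*} [Group G] [Group H] (α : G →* MulAut H) :
    SimpleGraph {L : Set H // (∃ a : H, L = orbitOf α a) ∧ 1 < L.ncard} :=
  SimpleGraph.fromRel fun L₁ L₂ => 1 < Nat.gcd L₁.1.ncard L₂.1.ncard

open MulAction Pointwise

namespace Subgroup

variable {G : Type*} [Group G]

theorem index_inf_eq_mul_of_coprime {S T : Subgroup G} (hS : S.index ≠ 0) (hT : T.index ≠ 0)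
    (hco : S.index.Coprime T.index) : (S ⊓ T).index = S.index * T.index :=
  index_inf_le.antisymm <| Nat.le_of_dvd (Nat.pos_of_ne_zero (index_inf_ne_zero hS hT)) <|
    hco.mul_dvd_of_dvd_of_dvd (index_dvd_of_le inf_le_left) (index_dvd_of_le inf_le_right)

theorem index_le_of_inf_le_of_coprime {S T U : Subgroup G} (hS : S.index ≠ 0)
    (hSUT : S ⊓ U ≤ T) (hco : T.index.Coprime U.index) : T.index ≤ S.index := by
  have hdvd : T.index ∣ S.relIndex U * U.index := by
    rw [← inf_relIndex_right, relIndex_mul_index inf_le_right]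
    exact index_dvd_of_le hSUT
  calc T.index ≤ S.relIndex U :=
        Nat.le_of_dvd (Nat.pos_of_ne_zero (mt index_eq_zero_of_relIndex_eq_zero hS))
          (hco.dvd_of_dvd_mul_right hdvd)
    _ ≤ S.relIndex ⊤ := relIndex_le_of_le_right le_top (by rwa [relIndex_top_right])
    _ = S.index := relIndex_top_right S

end Subgroup

namespace MulAction

variable {G α β : Type*} [Group G] [MulAction G α] [MulAction G β]

theorem stabilizer_prod_s5 (a : α) (b : β) :
    stabilizer G (a, b) = stabilizer G a ⊓ stabilizer G b := by
  ext g
  simp [Prod.ext_iff]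

theorem index_stabilizer_ne_zero {a : α} (ha : (orbit G a).Finite) :
    (stabilizer G a).index ≠ 0 := by
  rw [index_stabilizer]
  exact ((Set.ncard_pos ha).mpr ⟨a, mem_orbit_self a⟩).ne'

theorem orbit_prod_eq_of_coprime_s5 {a : α} {b : β} (ha : (orbit G a).Finite)
    (hb : (orbit G b).Finite) (hco : (orbit G a).ncard.Coprime (orbit G b).ncard) :
    orbit G (a, b) = orbit G a ×ˢ orbit G b := by
  have hsub : orbit G (a, b) ⊆ orbit G a ×ˢ orbit G b := by
    rintro _ ⟨g, rfl⟩
    exact ⟨mem_orbit a g, mem_orbit b g⟩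
  refine Set.eq_of_subset_of_ncard_le hsub ?_ (ha.prod hb)
  rw [Set.ncard_prod, ← index_stabilizer G (a, b), stabilizer_prod_s5,
    Subgroup.index_inf_eq_mul_of_coprime (index_stabilizer_ne_zero ha)
      (index_stabilizer_ne_zero hb), index_stabilizer, index_stabilizer]
  rwa [index_stabilizer, index_stabilizer]

theorem card_stabilizer_dvd_ncard (s : Set G) : Nat.card (stabilizer G s) ∣ s.ncard := by
  set K := stabilizer G s
  -- `s⁻¹` is a union of left cosets of `K`
  have hK : s⁻¹ * (K : Set G) = s⁻¹ := by
    rw [← inv_coe_set (H := K), ← mul_inv_rev, stabilizer_mul_self]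
  calc Nat.card K ∣ Nat.card K * Nat.card (((↑) : G → G ⧸ K) '' s⁻¹) := dvd_mul_right _ _
    _ = s.ncard := by
      rw [← Subgroup.card_mul_eq_card_subgroup_mul_card_quotient, hK, Nat.card_coe_set_eq,
        Set.ncard_inv]

end MulAction

section OrbitArithmetic

variable {G H : Type*} [Group G] [Group H] [MulDistribMulAction G H]

theorem orbit_inv (a : H) : orbit G a⁻¹ = (orbit G a)⁻¹ := by
  ext x
  simp only [mem_orbit_iff, Set.mem_inv, smul_inv']
  exact ⟨fun ⟨g, h⟩ => ⟨g, by rw [← h, inv_inv]⟩, fun ⟨g, h⟩ => ⟨g, by rw [h, inv_inv]⟩⟩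

theorem stabilizer_inf_stabilizer_mul_le {u v p : H} (hp : p = u * v ∨ p = v * u) :
    stabilizer G u ⊓ stabilizer G p ≤ stabilizer G v := by
  intro g hg
  obtain ⟨hu, hp'⟩ := Subgroup.mem_inf.mp hg
  rw [mem_stabilizer_iff] at hu hp' ⊢
  rcases hp with rfl | rfl <;> simpa [smul_mul', hu] using hp'

variable [Finite H]

theorem one_lt_ncard_orbit_of_not_coprime {a : H} {n : ℕ}
    (h : ¬ (orbit G a).ncard.Coprime n) : 1 < (orbit G a).ncard := by
  have hpos : 0 < (orbit G a).ncard := (Set.ncard_pos (Set.toFinite _)).mpr ⟨a, mem_orbit_self a⟩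
  by_contra hle
  exact h (show (orbit G a).ncard = 1 by omega ▸ Nat.coprime_one_left n)

theorem ncard_orbit_le_of_coprime {u v p : H} (hp : p = u * v ∨ p = v * u)
    (hco : (orbit G v).ncard.Coprime (orbit G p).ncard) :
    (orbit G v).ncard ≤ (orbit G u).ncard := by
  simp only [← index_stabilizer] at hco ⊢
  exact Subgroup.index_le_of_inf_le_of_coprime (index_stabilizer_ne_zero (Set.toFinite _))
    (stabilizer_inf_stabilizer_mul_le hp) hco

theorem ncard_orbit_mul_eq_or {a b : H} (hlt : (orbit G a).ncard < (orbit G b).ncard)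
    (hco : (orbit G a).ncard.Coprime (orbit G b).ncard) :
    (orbit G (a * b)).ncard = (orbit G b).ncard ∨
      ¬ (orbit G a).ncard.Coprime (orbit G (a * b)).ncard ∧
        ¬ (orbit G (a * b)).ncard.Coprime (orbit G b).ncard := by
  have hab : a = a * b * b⁻¹ := by group
  have hinv : (orbit G b⁻¹).ncard = (orbit G b).ncard := by rw [orbit_inv, Set.ncard_inv]
  have hb : ¬ (orbit G (a * b)).ncard.Coprime (orbit G b).ncard := fun h =>
    (ncard_orbit_le_of_coprime (Or.inl rfl) h.symm).not_gt hlt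
  rcases lt_trichotomy (orbit G (a * b)).ncard (orbit G b).ncard with hlt' | heq | hgt
  · have := ncard_orbit_le_of_coprime (G := G) (v := b⁻¹) (Or.inl hab)
      (by rwa [hinv, Nat.coprime_comm])
    rw [hinv] at this
    omega
  · exact Or.inl heq
  · refine Or.inr ⟨fun h => ?_, hb⟩
    have := ncard_orbit_le_of_coprime (G := G) (u := b⁻¹) (Or.inr hab) h.symm
    rw [hinv] at this
    omega

theorem smul_orbit_eq_orbit_mul {a b a' : H} (hco : (orbit G a).ncard.Coprime (orbit G b).ncard)
    (heq : (orbit G (a * b)).ncard = (orbit G b).ncard) (ha' : a' ∈ orbit G a) :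
    a' • orbit G b = orbit G (a * b) := by
  refine Set.eq_of_subset_of_ncard_le ?_ (by rw [heq, Set.ncard_smul_set]) (Set.toFinite _)
  rintro _ ⟨b', hb', rfl⟩
  have hpair : (a', b') ∈ orbit G (a, b) := by
    rw [orbit_prod_eq_of_coprime_s5 (Set.toFinite _) (Set.toFinite _) hco]
    exact ⟨ha', hb'⟩
  obtain ⟨g, hg⟩ := mem_orbit_iff.mp hpair
  rw [Prod.smul_mk, Prod.mk.injEq] at hg
  exact mem_orbit_iff.mpr ⟨g, by rw [smul_mul', hg.1, hg.2]; rfl⟩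

theorem inv_mul_mem_stabilizer_orbit {a b a' : H}
    (hco : (orbit G a).ncard.Coprime (orbit G b).ncard)
    (heq : (orbit G (a * b)).ncard = (orbit G b).ncard) (ha' : a' ∈ orbit G a) :
    a⁻¹ * a' ∈ stabilizer H (orbit G b) := by
  rw [mem_stabilizer_iff, mul_smul, smul_orbit_eq_orbit_mul hco heq ha',
    ← smul_orbit_eq_orbit_mul hco heq (mem_orbit_self a), inv_smul_smul]

theorem orbit_eq_singleton_of_coprime {a b c : H}
    (hab : (orbit G a).ncard.Coprime (orbit G b).ncard)
    (hac : (orbit G a).ncard.Coprime (orbit G c).ncard)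
    (hbc : (orbit G b).ncard.Coprime (orbit G c).ncard)
    (hb : (orbit G (a * b)).ncard = (orbit G b).ncard)
    (hc : (orbit G (a * c)).ncard = (orbit G c).ncard) :
    orbit G a = {a} := by
  have hdisj : Disjoint (stabilizer H (orbit G b)) (stabilizer H (orbit G c)) :=
    Subgroup.disjoint_of_coprime_natCard <|
      hbc.of_dvd (card_stabilizer_dvd_ncard _) (card_stabilizer_dvd_ncard _)
  refine Set.eq_singleton_iff_unique_mem.mpr ⟨mem_orbit_self a, fun a' ha' => ?_⟩
  have h1 := Subgroup.disjoint_def.mp hdisj (inv_mul_mem_stabilizer_orbit hab hb ha')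
    (inv_mul_mem_stabilizer_orbit hac hc ha')
  exact (inv_mul_eq_one.mp h1).symm

end OrbitArithmetic

theorem SimpleGraph.exists_three_not_reachable {V : Type*} {G : SimpleGraph V}
    (h : 2 < Nat.card G.ConnectedComponent) :
    ∃ u v w, ¬ G.Reachable u v ∧ ¬ G.Reachable u w ∧ ¬ G.Reachable v w := by
  have : Finite G.ConnectedComponent := Nat.finite_of_card_ne_zero (by omega)
  have := Fintype.ofFinite G.ConnectedComponent
  rw [Nat.card_eq_fintype_card, Fintype.two_lt_card_iff] at h
  obtain ⟨c₁, c₂, c₃, h₁₂, h₁₃, h₂₃⟩ := h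
  induction c₁ using SimpleGraph.ConnectedComponent.ind with | h u =>
  induction c₂ using SimpleGraph.ConnectedComponent.ind with | h v =>
  induction c₃ using SimpleGraph.ConnectedComponent.ind with | h w =>
  simp only [ne_eq, SimpleGraph.ConnectedComponent.eq] at h₁₂ h₁₃ h₂₃
  exact ⟨u, v, w, h₁₂, h₁₃, h₂₃⟩

namespace commonDivisorGraph

variable {G H : Type*} [Group G] [Group H] {α : G →* MulAut H}
  {u v w : {L : Set H // (∃ a : H, L = orbitOf α a) ∧ 1 < L.ncard}}

theorem reachable_of_not_coprime (h : ¬ u.1.ncard.Coprime v.1.ncard) :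
    (commonDivisorGraph α).Reachable u v := by
  by_cases huv : u = v
  · exact huv ▸ SimpleGraph.Reachable.refl _
  refine SimpleGraph.Adj.reachable ((SimpleGraph.fromRel_adj _ _ _).mpr ⟨huv, Or.inl ?_⟩)
  have := Nat.gcd_pos_of_pos_left v.1.ncard (Nat.zero_lt_of_lt u.2.2)
  rw [Nat.Coprime] at h
  omega

theorem coprime_of_not_reachable (h : ¬ (commonDivisorGraph α).Reachable u v) :
    u.1.ncard.Coprime v.1.ncard :=
  not_not.mp (mt reachable_of_not_coprime h)

theorem ncard_ne_of_not_reachable (h : ¬ (commonDivisorGraph α).Reachable u v) :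
    u.1.ncard ≠ v.1.ncard := fun he =>
  h (reachable_of_not_coprime (by rw [he, Nat.coprime_self]; exact v.2.2.ne'))

variable [Finite H]

theorem ncard_orbitOf_mul_eq {a b : H} (ha : u.1 = orbitOf α a) (hb : v.1 = orbitOf α b)
    (hlt : u.1.ncard < v.1.ncard) (huv : ¬ (commonDivisorGraph α).Reachable u v) :
    (orbitOf α (a * b)).ncard = (orbitOf α b).ncard := by
  -- for this action `orbitOf α x` is definitionally `orbit G x`
  let := MulDistribMulAction.compHom H α
  have hco := coprime_of_not_reachable huv
  rw [ha, hb] at hco hlt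
  refine (ncard_orbit_mul_eq_or (G := G) hlt hco).resolve_right fun ⟨hab, hb'⟩ => huv ?_
  let x : {L : Set H // (∃ a : H, L = orbitOf α a) ∧ 1 < L.ncard} :=
    ⟨orbitOf α (a * b), ⟨a * b, rfl⟩, one_lt_ncard_orbit_of_not_coprime hb'⟩
  exact (reachable_of_not_coprime (v := x) (by rwa [ha])).trans
    (reachable_of_not_coprime (by rwa [hb]))

theorem false_of_not_reachable_of_lt (huv : ¬ (commonDivisorGraph α).Reachable u v)
    (huw : ¬ (commonDivisorGraph α).Reachable u w)
    (hvw : ¬ (commonDivisorGraph α).Reachable v w)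
    (hv : u.1.ncard < v.1.ncard) (hw : u.1.ncard < w.1.ncard) : False := by
  let := MulDistribMulAction.compHom H α
  obtain ⟨a, ha⟩ := u.2.1
  obtain ⟨b, hb⟩ := v.2.1
  obtain ⟨c, hc⟩ := w.2.1
  have hab := coprime_of_not_reachable huv
  have hac := coprime_of_not_reachable huw
  have hbc := coprime_of_not_reachable hvw
  have hsingle : orbit G a = {a} := by
    simp only [ha, hb, hc] at hab hac hbc
    exact orbit_eq_singleton_of_coprime hab hac hbc (ncard_orbitOf_mul_eq ha hb hv huv)
      (ncard_orbitOf_mul_eq ha hc hw huw)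
  have hu := u.2.2
  rw [ha] at hu
  exact hu.ne' (by rw [← Set.ncard_singleton a, ← hsingle]; rfl)

end commonDivisorGraph

theorem stmt_5_general {G H : Type*} [Group G] [Group H] [Finite H]
    (α : G →* MulAut H) :
    Nat.card (commonDivisorGraph α).ConnectedComponent ≤ 2 := by
  open commonDivisorGraph in
  by_contra! h
  obtain ⟨u, v, w, huv, huw, hvw⟩ := SimpleGraph.exists_three_not_reachable h
  have := ncard_ne_of_not_reachable huv
  have := ncard_ne_of_not_reachable huw
  have := ncard_ne_of_not_reachable hvw
  rcases (by omega : (u.1.ncard < v.1.ncard ∧ u.1.ncard < w.1.ncard) ∨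
      (v.1.ncard < u.1.ncard ∧ v.1.ncard < w.1.ncard) ∨
      (w.1.ncard < u.1.ncard ∧ w.1.ncard < v.1.ncard)) with ⟨h₁, h₂⟩ | ⟨h₁, h₂⟩ | ⟨h₁, h₂⟩
  · exact false_of_not_reachable_of_lt huv huw hvw h₁ h₂
  · exact false_of_not_reachable_of_lt (mt .symm huv) hvw huw h₁ h₂
  · exact false_of_not_reachable_of_lt (mt .symm huw) (mt .symm hvw) huv h₁ h₂

theorem stmt_5 {G H : Type*} [Group G] [Group H] [Finite G] [Finite H]
    (α : G →* MulAut H)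
    (hpf : ∀ p : ℕ, p.Prime → (p ∣ Nat.card G ↔ p ∣ Nat.card H)) :
    Nat.card (commonDivisorGraph α).ConnectedComponent ≤ 2 :=
  stmt_5_general α
end

section
/- Let p be a prime number and let G and H be finite p-groups, with α : G →* MulAut H an action of G on H by automorphisms. Suppose there is at least one non-trivial orbit, and let p^s be the minimal size of a non-trivial orbit. Let H^G be the fixed-point subgroup and c(p^s) the number of orbits of size p^s. Then exactly one of the following holds: (1) |H^G| = p^s and c(p^s) ≡ p − 1 (mod p(p−1)); (2) |H^G| > p^s and c(p^s) ≡ 0 (mod p(p−1)). -/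
theorem MulAction.card_dvd_card_of_isCancelSMul (C X : Type*) [Group C] [MulAction C X]
    [IsCancelSMul C X] : Nat.card C ∣ Nat.card X := by
  rw [Nat.card_congr (MulAction.selfEquivOrbitsQuotientProd (X := X)
    (IsCancelSMul.stabilizer_eq_bot (G := C))), Nat.card_prod]
  exact dvd_mul_left _ _

theorem Equiv.Perm.dvd_card_of_pow_apply_eq_self_iff {S : Type*} [Finite S] (σ : Equiv.Perm S)
    {d : ℕ} (hσ : ∀ (j : ℕ) (x : S), (σ ^ j) x = x ↔ d ∣ j) : d ∣ Nat.card S := by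
  rcases isEmpty_or_nonempty S with hS | ⟨⟨x₀⟩⟩
  · simp
  have hpow : ∀ j : ℕ, σ ^ j = 1 ↔ d ∣ j := fun j =>
    ⟨fun h => (hσ j x₀).1 (by simp [h]), fun h => Equiv.ext fun x => (hσ j x).2 h⟩
  have hord : orderOf σ = d := Nat.dvd_antisymm
    (orderOf_dvd_of_pow_eq_one ((hpow d).2 dvd_rfl)) ((hpow _).1 (pow_orderOf_eq_one σ))
  have : IsCancelSMul (Subgroup.zpowers σ) S := by
    refine isCancelSMul_iff_eq_one_of_smul_eq.2 fun ⟨c, hc⟩ x hcx => ?_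
    obtain ⟨j, rfl⟩ := mem_powers_iff_mem_zpowers.2 hc
    exact Subtype.ext ((hpow j).2 ((hσ j x).1 hcx))
  simpa [hord] using MulAction.card_dvd_card_of_isCancelSMul (Subgroup.zpowers σ) S

theorem Nat.coprime_self_sub_one {p : ℕ} (hp : 0 < p) : p.Coprime (p - 1) :=
  (Nat.coprime_self_sub_right hp).2 (Nat.coprime_one_right p)

theorem Nat.modEq_sub_one_of_dvd_add_one {p c : ℕ} (hp : 0 < p) (h₁ : p ∣ c + 1)
    (h₂ : p - 1 ∣ c) : c ≡ p - 1 [MOD p * (p - 1)] := by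
  refine (Nat.modEq_and_modEq_iff_modEq_mul (Nat.coprime_self_sub_one hp)).1 ⟨?_, ?_⟩
  · refine Nat.ModEq.add_right_cancel' 1 ?_
    rw [Nat.sub_add_cancel hp]
    exact (Nat.modEq_zero_iff_dvd.2 h₁).trans (Nat.modEq_zero_iff_dvd.2 dvd_rfl).symm
  · exact (Nat.modEq_zero_iff_dvd.2 h₂).trans (Nat.modEq_zero_iff_dvd.2 dvd_rfl).symm

theorem Nat.Prime.eq_and_dvd_add_one_or_lt_and_dvd {p s t c : ℕ} (hp : p.Prime)
    (h : p ^ (s + 1) ∣ p ^ t + p ^ s * c) : (t = s ∧ p ∣ c + 1) ∨ (s < t ∧ p ∣ c) := by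
  have hst : s ≤ t := by
    by_contra! hts
    have h1 : p ^ (t + 1) ∣ p ^ t + p ^ s * c := (pow_dvd_pow p (by omega)).trans h
    have h2 : p ^ (t + 1) ∣ p ^ s * c := (pow_dvd_pow p hts).mul_right c
    have h3 := (Nat.pow_dvd_pow_iff_le_right hp.one_lt).1 ((Nat.dvd_add_left h2).1 h1)
    omega
  obtain ⟨u, rfl⟩ := Nat.exists_eq_add_of_le hst
  rw [pow_succ, pow_add, ← mul_add, Nat.mul_dvd_mul_iff_left (pow_pos hp.pos s)] at h
  rcases u with _ | u
  · exact Or.inl ⟨rfl, by simpa [add_comm] using h⟩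
  · exact Or.inr ⟨by omega, (Nat.dvd_add_right (dvd_pow_self p u.succ_ne_zero)).1 h⟩

-- `K = r ^ p ^ n` for a generator `r` of `(ZMod p)ˣ`: by Fermat `K ≡ r (mod p)`, and
-- `K ^ (p - 1) = r ^ φ (p ^ (n + 1))`.
theorem exists_pow_sub_one_modEq_one_orderOf_eq {p : ℕ} (hp : p.Prime) (n : ℕ) :
    ∃ K : ℕ, K.Coprime p ∧ K ^ (p - 1) ≡ 1 [MOD p ^ n] ∧ orderOf (K : ZMod p) = p - 1 := by
  have := Fact.mk hp
  obtain ⟨r, hr⟩ := IsCyclic.exists_generator (α := (ZMod p)ˣ)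
  have hr_cop : (r : ZMod p).val.Coprime p := ZMod.val_coe_unit_coprime r
  refine ⟨(r : ZMod p).val ^ p ^ n, hr_cop.pow_left _, ?_, ?_⟩
  · rw [← pow_mul, ← Nat.totient_prime_pow_succ hp]
    exact (Nat.ModEq.pow_totient (hr_cop.pow_right _)).of_dvd (pow_dvd_pow p n.le_succ)
  · rw [Nat.cast_pow, ZMod.natCast_zmod_val, ZMod.pow_card_pow, orderOf_units,
      orderOf_eq_card_of_forall_mem_zpowers hr, Nat.card_eq_fintype_card, ZMod.card_units]

theorem IsPGroup.pow_pow_eq_self_iff {p : ℕ} {H : Type*} [Group H] [Finite H] [Fact p.Prime]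
    (hH : IsPGroup p H) {K : ℕ} (hK : K ^ (p - 1) ≡ 1 [MOD Nat.card H])
    (hKord : orderOf (K : ZMod p) = p - 1) {x : H} (hx : x ≠ 1) (j : ℕ) :
    x ^ K ^ j = x ↔ p - 1 ∣ j := by
  constructor
  · intro hxj
    obtain ⟨n, hn⟩ := IsPGroup.iff_card.mp hH
    obtain ⟨m, -, hm⟩ := (Nat.dvd_prime_pow Fact.out).1 (hn ▸ orderOf_dvd_natCard x)
    have hm0 : m ≠ 0 := by
      rintro rfl
      exact hx (orderOf_eq_one_iff.1 (by simpa using hm))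
    have hKj : K ^ j ≡ 1 [MOD orderOf x] := pow_eq_pow_iff_modEq.1 (by rwa [pow_one])
    have hKjp : K ^ j ≡ 1 [MOD p] := hKj.of_dvd (hm ▸ dvd_pow_self p hm0)
    rw [← hKord]
    apply orderOf_dvd_of_pow_eq_one
    simpa using (ZMod.natCast_eq_natCast_iff _ _ _).2 hKjp
  · rintro ⟨q, rfl⟩
    have hKq : (K ^ (p - 1)) ^ q ≡ 1 [MOD Nat.card H] := by simpa using hK.pow q
    conv_rhs => rw [← pow_one x]
    rw [pow_mul, pow_eq_pow_iff_modEq]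
    exact hKq.of_dvd (orderOf_dvd_natCard x)

theorem IsPGroup.sub_one_dvd_ncard {p : ℕ} [Fact p.Prime] {H : Type*} [Group H] [Finite H]
    (hH : IsPGroup p H) {S : Set H} (hS1 : 1 ∉ S)
    (hS : ∀ (k : ℕ) (x : H), k.Coprime p → (x ^ k ∈ S ↔ x ∈ S)) : p - 1 ∣ S.ncard := by
  obtain ⟨n, hn⟩ := IsPGroup.iff_card.mp hH
  obtain ⟨K, hKp, hK, hKord⟩ := exists_pow_sub_one_modEq_one_orderOf_eq (Fact.out : p.Prime) n
  have hKcop : (Nat.card H).Coprime K := hn ▸ (hKp.symm.pow_left n)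
  let σ : Equiv.Perm S := Equiv.Perm.subtypePerm (powCoprime hKcop) fun x => hS K x hKp
  have hσ : ∀ (j : ℕ) (x : S), ((σ ^ j) x : H) = (x : H) ^ K ^ j := by
    intro j x
    induction j with
    | zero => simp
    | succ j ih =>
      rw [pow_succ', Equiv.Perm.mul_apply]
      change ((σ ^ j) x : H) ^ K = _
      rw [ih, ← pow_mul, pow_succ]
  rw [← Nat.card_coe_set_eq]
  refine σ.dvd_card_of_pow_apply_eq_self_iff fun j x => ?_
  rw [← Subtype.coe_inj, hσ]
  exact hH.pow_pow_eq_self_iff (hn ▸ hK) hKord (fun h => hS1 (h ▸ x.2)) j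

section Orbits

variable {G H : Type*} [Group G] [Group H] (α : G →* MulAut H)

/-- The orbit count `c(m)`. -/
noncomputable def orbitCount (m : ℕ) : ℕ :=
  Nat.card {L : Set H // (∃ a : H, L = orbitOf α a) ∧ L.ncard = m}

theorem mem_orbitOf_self (a : H) : a ∈ orbitOf α a := ⟨1, by simp⟩

theorem orbitOf_eq_of_mem {a x : H} (h : x ∈ orbitOf α a) : orbitOf α x = orbitOf α a := by
  obtain ⟨g, rfl⟩ := h
  ext y
  constructor
  · rintro ⟨g', rfl⟩
    exact ⟨g' * g, by simp⟩
  · rintro ⟨g', rfl⟩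
    exact ⟨g' * g⁻¹, by simp [← MulAut.mul_apply, ← map_mul]⟩

theorem orbitOf_pow (a : H) (k : ℕ) : orbitOf α (a ^ k) = (· ^ k) '' orbitOf α a := by
  ext y
  simp [orbitOf]

theorem ncard_orbitOf_pow [Finite H] {k : ℕ} (hk : (Nat.card H).Coprime k) (a : H) :
    (orbitOf α (a ^ k)).ncard = (orbitOf α a).ncard := by
  rw [orbitOf_pow]
  exact Set.ncard_image_of_injective _ (powCoprime hk).injective

theorem ncard_orbitOf_eq_one_iff {a : H} : (orbitOf α a).ncard = 1 ↔ ∀ g : G, α g a = a := by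
  rw [Set.ncard_eq_one]
  constructor
  · rintro ⟨b, hb⟩ g
    have ha : a = b := by simpa [hb] using mem_orbitOf_self α a
    have hga : α g a ∈ orbitOf α a := ⟨g, rfl⟩
    simpa [hb, ← ha] using hga
  · intro h
    exact ⟨a, Set.eq_singleton_iff_unique_mem.2 ⟨mem_orbitOf_self α a, by
      rintro _ ⟨g, rfl⟩; exact h g⟩⟩

theorem ncard_orbitOf_lt_card [Finite H] {a : H} (ha : (orbitOf α a).ncard ≠ 1) :
    (orbitOf α a).ncard < Nat.card H := by
  refine Set.ncard_lt_card fun h => ha ((ncard_orbitOf_eq_one_iff α).2 fun g => ?_)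
  obtain ⟨g', hg'⟩ : (1 : H) ∈ orbitOf α a := h ▸ Set.mem_univ 1
  rw [(MulEquiv.map_eq_one_iff _).1 hg', map_one]

theorem ncard_orbitOf_dvd_card [Finite G] (a : H) : (orbitOf α a).ncard ∣ Nat.card G := by
  let := MulAction.compHom H α
  change (MulAction.orbit G a).ncard ∣ _
  rw [← MulAction.index_stabilizer]
  exact (MulAction.stabilizer G a).index_dvd_card

theorem card_ncard_orbitOf_eq [Finite H] (m : ℕ) :
    Nat.card {x : H // (orbitOf α x).ncard = m} = m * orbitCount α m := by
  let e : {x : H // (orbitOf α x).ncard = m} ≃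
      Σ L : {L : Set H // (∃ a : H, L = orbitOf α a) ∧ L.ncard = m}, L.1 :=
    { toFun := fun x => ⟨⟨orbitOf α x, ⟨x, rfl⟩, x.2⟩, x, mem_orbitOf_self α x⟩
      invFun := fun y => ⟨y.2, by
        obtain ⟨⟨L, ⟨a, rfl⟩, hL⟩, x, hx⟩ := y
        rwa [orbitOf_eq_of_mem α hx]⟩
      left_inv := fun x => rfl
      right_inv := by
        rintro ⟨⟨L, ⟨a, hLa⟩, hL⟩, x, hx⟩
        obtain rfl : orbitOf α x = L := hLa ▸ orbitOf_eq_of_mem α (hLa ▸ hx)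
        rfl }
  have := Fintype.ofFinite {L : Set H // (∃ a : H, L = orbitOf α a) ∧ L.ncard = m}
  rw [Nat.card_congr e, Nat.card_sigma,
    Finset.sum_congr rfl fun L _ => (Nat.card_coe_set_eq L.1).trans L.2.2, Finset.sum_const,
    Finset.card_univ, smul_eq_mul, mul_comm, orbitCount, Nat.card_eq_fintype_card]

theorem orbitCount_one [Finite H] : orbitCount α 1 = Nat.card {h : H // ∀ g : G, α g h = h} := by
  rw [← one_mul (orbitCount α 1), ← card_ncard_orbitOf_eq]
  exact Nat.card_congr (Equiv.subtypeEquivRight fun _ => ncard_orbitOf_eq_one_iff α)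

theorem card_modEq_orbitCount [Finite H] {q r : ℕ} (hq : q ≠ 1)
    (hsize : ∀ x : H, (orbitOf α x).ncard = 1 ∨ (orbitOf α x).ncard = q ∨
      r ∣ (orbitOf α x).ncard) :
    Nat.card H ≡ orbitCount α 1 + q * orbitCount α q [MOD r] := by
  classical
  have := Fintype.ofFinite H
  let size : H → ℕ := fun x => (orbitOf α x).ncard
  have hcard : ∀ m, (Finset.univ.filter fun x => size x = m).card = m * orbitCount α m :=
    fun m => by
      rw [← card_ncard_orbitOf_eq, Nat.card_eq_fintype_card, Fintype.card_subtype]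
  rw [← ZMod.natCast_eq_natCast_iff, Nat.card_eq_fintype_card, ← Finset.card_univ,
    Finset.card_eq_sum_card_image size, Nat.cast_sum, Finset.sum_eq_add 1 q hq.symm,
    hcard, hcard, one_mul, Nat.cast_add]
  · rintro m hm ⟨hm1, hmq⟩
    obtain ⟨x, -, rfl⟩ := Finset.mem_image.1 hm
    rw [hcard, (ZMod.natCast_eq_zero_iff _ _)]
    exact ((hsize x).resolve_left hm1 |>.resolve_left hmq).mul_right _
  all_goals
    intro hm
    rw [Finset.card_eq_zero.2, Nat.cast_zero]
    exact Finset.filter_eq_empty_iff.2 fun x _ hx =>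
      hm (hx ▸ Finset.mem_image_of_mem size (Finset.mem_univ x))

end Orbits

section PGroup

variable {p : ℕ} [Fact p.Prime] {G H : Type*} [Group G] [Group H] (α : G →* MulAut H)

theorem ncard_orbitOf_eq_one_or_eq_or_dvd [Finite G] (hG : IsPGroup p G) {s : ℕ}
    (hmin : ∀ b : H, 1 < (orbitOf α b).ncard → p ^ s ≤ (orbitOf α b).ncard) (x : H) :
    (orbitOf α x).ncard = 1 ∨ (orbitOf α x).ncard = p ^ s ∨
      p ^ (s + 1) ∣ (orbitOf α x).ncard := by
  have hp : p.Prime := Fact.out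
  obtain ⟨k, hk⟩ := IsPGroup.iff_card.mp hG
  obtain ⟨j, -, hj⟩ := (Nat.dvd_prime_pow hp).1 (hk ▸ ncard_orbitOf_dvd_card α x)
  have hminx := hmin x
  rw [hj] at hminx ⊢
  rcases j.eq_zero_or_pos with rfl | hj0
  · simp
  have hsj : s ≤ j :=
    (Nat.pow_le_pow_iff_right hp.one_lt).1 (hminx (Nat.one_lt_pow hj0.ne' hp.one_lt))
  rcases hsj.eq_or_lt with rfl | hlt
  · simp
  · exact Or.inr (Or.inr (pow_dvd_pow p hlt))

theorem IsPGroup.exists_card_fixed_eq_pow [Finite H] (hH : IsPGroup p H) :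
    ∃ t : ℕ, Nat.card {h : H // ∀ g : G, α g h = h} = p ^ t := by
  let := MulDistribMulAction.compHom H α
  obtain ⟨t, ht⟩ := IsPGroup.iff_card.mp (hH.to_subgroup (FixedPoints.subgroup G H))
  exact ⟨t, ht⟩

theorem IsPGroup.sub_one_dvd_orbitCount_pow [Finite H] (hH : IsPGroup p H) {s : ℕ}
    (hs : s ≠ 0) : p - 1 ∣ orbitCount α (p ^ s) := by
  have hp : p.Prime := Fact.out
  obtain ⟨n, hn⟩ := IsPGroup.iff_card.mp hH
  refine ((Nat.coprime_self_sub_one hp.pos).symm.pow_right s).dvd_of_dvd_mul_left ?_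
  rw [← card_ncard_orbitOf_eq]
  refine Nat.card_coe_set_eq {x : H | (orbitOf α x).ncard = p ^ s} ▸
    hH.sub_one_dvd_ncard ?_ fun k x hk => ?_
  · rw [Set.mem_ofPred_eq, (ncard_orbitOf_eq_one_iff α).2 fun g => map_one (α g)]
    exact (Nat.one_lt_pow hs hp.one_lt).ne
  · rw [Set.mem_ofPred_eq, Set.mem_ofPred_eq, ncard_orbitOf_pow α (hn ▸ hk.symm.pow_left n)]

end PGroup

theorem stmt_9 {G H : Type*} [Group G] [Group H] [Finite G] [Finite H]
    {p : ℕ} (hp : p.Prime) (hG : IsPGroup p G) (hH : IsPGroup p H)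
    (α : G →* MulAut H) (s : ℕ)
    (hex : ∃ a : H, 1 < (orbitOf α a).ncard ∧ (orbitOf α a).ncard = p ^ s)
    (hmin : ∀ b : H, 1 < (orbitOf α b).ncard → p ^ s ≤ (orbitOf α b).ncard) :
    Xor'
      (Nat.card {h : H // ∀ g : G, α g h = h} = p ^ s ∧
        Nat.card {L : Set H // (∃ a : H, L = orbitOf α a) ∧ L.ncard = p ^ s} ≡
          p - 1 [MOD p * (p - 1)])
      (p ^ s < Nat.card {h : H // ∀ g : G, α g h = h} ∧
        Nat.card {L : Set H // (∃ a : H, L = orbitOf α a) ∧ L.ncard = p ^ s} ≡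
          0 [MOD p * (p - 1)]) := by
  have := Fact.mk hp
  obtain ⟨a, ha1, ha⟩ := hex
  have hs : s ≠ 0 := by
    rintro rfl
    simp [ha] at ha1
  obtain ⟨n, hn⟩ := IsPGroup.iff_card.mp hH
  have hsn : s < n := by
    have := ncard_orbitOf_lt_card α ha1.ne'
    rwa [ha, hn, Nat.pow_lt_pow_iff_right hp.one_lt] at this
  obtain ⟨t, hF⟩ := hH.exists_card_fixed_eq_pow α
  have hclass : p ^ (s + 1) ∣ p ^ t + p ^ s * orbitCount α (p ^ s) := by
    have := card_modEq_orbitCount α (Nat.one_lt_pow hs hp.one_lt).ne'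
      (ncard_orbitOf_eq_one_or_eq_or_dvd α hG hmin)
    rw [hn, orbitCount_one, hF] at this
    exact Nat.modEq_zero_iff_dvd.1
      (this.symm.trans (Nat.modEq_zero_iff_dvd.2 (pow_dvd_pow p hsn)))
  have hc := hH.sub_one_dvd_orbitCount_pow α hs
  rcases hp.eq_and_dvd_add_one_or_lt_and_dvd hclass with ⟨rfl, hc1⟩ | ⟨hst, hc0⟩
  · exact Or.inl ⟨⟨hF, Nat.modEq_sub_one_of_dvd_add_one hp.pos hc1 hc⟩, fun h => h.1.ne' hF⟩
  · have hlt : p ^ s < p ^ t := Nat.pow_lt_pow_right hp.one_lt hst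
    have hc' : p * (p - 1) ∣ orbitCount α (p ^ s) :=
      (Nat.coprime_self_sub_one hp.pos).mul_dvd_of_dvd_of_dvd hc0 hc
    exact Or.inr ⟨⟨hF ▸ hlt, Nat.modEq_zero_iff_dvd.2 hc'⟩, fun h => hlt.ne' (hF ▸ h.1)⟩
end
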